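/- arXiv:1911.09175 — 5 statements merged into one kernel-verified Lean document; each statement's English description precedes it below -/
import Mathlib

section
/- If x_i(0) ∈ [0,1] for all i, then the trajectory of the discrete-time SIS system x(k+1) = x(k) + h((I - X(k))B̄(k) - D(k))x(k) satisfies x_i(k) ∈ [0,1] for all i and all k ≥ 0. -/
open Matrix Filter

noncomputable def specRad {m : Type*} [Fintype m] [DecidableEq m] (M : Matrix m m ℝ) : ℝ :=
  sSup {r : ℝ | ∃ μ ∈ spectrum ℂ (M.map (algebraMap ℝ ℂ)), r = ‖μ‖}

noncomputable def mono {n : ℕ} (p : ℕ) (M : ℕ → Matrix (Fin n) (Fin n) ℝ) (k : ℕ) :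
    Matrix (Fin n) (Fin n) ℝ :=
  (List.range p).foldl (fun A i => M (k + i) * A) 1

def SISdyn {n : ℕ} (h : ℝ) (β : ℕ → Fin n → Fin n → ℝ) (δ : ℕ → Fin n → ℝ)
    (x : ℕ → Fin n → ℝ) : Prop :=
  ∀ k i, x (k + 1) i = x k i + h * ((1 - x k i) * (∑ j, β k i j * x k j) - δ k i * x k i)

def MatIrreducible {n : ℕ} (M : Matrix (Fin n) (Fin n) ℝ) : Prop :=
  ∀ S : Set (Fin n), S.Nonempty → Sᶜ.Nonempty → ∃ i ∈ S, ∃ j ∈ Sᶜ, M i j ≠ 0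

/-- With `c = h s` and `e = h d` the new value is `a (1 - e) + (1 - a) c`, and one minus it is
`(1 - a)(1 - c) + e a`: both are sums of products of numbers in `[0, 1]`. -/
lemma sis_update_mem_Icc {h a s d : ℝ} (ha : a ∈ Set.Icc 0 1) (hs0 : 0 ≤ h * s) (hs1 : h * s ≤ 1)
    (hd0 : 0 ≤ h * d) (hd1 : h * d ≤ 1) : a + h * ((1 - a) * s - d * a) ∈ Set.Icc 0 1 := by
  obtain ⟨ha0, ha1⟩ := ha
  constructor
  · nlinarith [mul_nonneg ha0 (sub_nonneg.2 hd1), mul_nonneg (sub_nonneg.2 ha1) hs0]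
  · nlinarith [mul_nonneg (sub_nonneg.2 ha1) (sub_nonneg.2 hs1), mul_nonneg hd0 ha0]

lemma Finset.sum_mul_mem_Icc_of_mem_Icc {ι : Type*} (t : Finset ι) {w y : ι → ℝ}
    (hw : ∀ j, 0 ≤ w j) (hy : ∀ j, y j ∈ Set.Icc 0 1) :
    ∑ j ∈ t, w j * y j ∈ Set.Icc 0 (∑ j ∈ t, w j) :=
  ⟨Finset.sum_nonneg fun j _ => mul_nonneg (hw j) (hy j).1,
    Finset.sum_le_sum fun j _ => mul_le_of_le_one_right (hw j) (hy j).2⟩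

theorem stmt0 {n : ℕ} (h : ℝ) (β : ℕ → Fin n → Fin n → ℝ) (δ : ℕ → Fin n → ℝ)
    (x : ℕ → Fin n → ℝ) (hh : 0 < h)
    (hδ0 : ∀ k i, 0 ≤ δ k i) (hβ0 : ∀ k i j, 0 ≤ β k i j)
    (hδ1 : ∀ k i, h * δ k i ≤ 1) (hβ1 : ∀ k i, h * ∑ j, β k i j ≤ 1)
    (hdyn : SISdyn h β δ x) (h0 : ∀ i, x 0 i ∈ Set.Icc (0:ℝ) 1) :
    ∀ k i, x k i ∈ Set.Icc (0:ℝ) 1 := by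
  intro k
  induction k with
  | zero => exact h0
  | succ k ih =>
    intro i
    obtain ⟨hS0, hS1⟩ := Finset.univ.sum_mul_mem_Icc_of_mem_Icc (hβ0 k i) ih
    rw [hdyn k i]
    exact sis_update_mem_Icc (ih i) (mul_nonneg hh.le hS0)
      ((mul_le_mul_of_nonneg_left hS1 hh.le).trans (hβ1 k i))
      (mul_nonneg hh.le (hδ0 k i)) (hδ1 k i)
end

section
/- If M is an entrywise nonnegative square real matrix with spectral radius ρ(M) < 1, then there exists a diagonal matrix P with strictly positive diagonal entries such that MᵀPM - P is negative definite. -/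
open Matrix Filter

/-!
Choose `ρ(M) < r < 1`. By Gelfand's formula the Neumann series `S = ∑ (M / r) ^ k` converges;
`S` is entrywise nonnegative and `(1 - M / r) S = 1`, so `v = S 𝟙` is positive with `M v ≤ r v`.
The same argument for `Mᵀ` gives `u > 0` with `Mᵀ u ≤ r u`. For `P = diag (u / v)`, Cauchy–Schwarz
weighted by `v` (a Schur test) gives `xᵀ Mᵀ P M x ≤ r² xᵀ P x < xᵀ P x` for `x ≠ 0`.
-/

open scoped NNReal ENNReal

theorem spectrum.eventually_nnnorm_pow_le {A : Type*} [NormedRing A] [NormedAlgebra ℂ A]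
    [CompleteSpace A] (a : A) {c : ℝ≥0} (h : spectralRadius ℂ a < c) :
    ∀ᶠ k : ℕ in atTop, ‖a ^ k‖₊ ≤ c ^ k := by
  have gelfand := spectrum.pow_nnnorm_pow_one_div_tendsto_nhds_spectralRadius a
  filter_upwards [gelfand.eventually_lt_const h, eventually_gt_atTop 0] with k hk hk0
  rw [one_div, ENNReal.rpow_inv_lt_iff (by positivity), ENNReal.rpow_natCast] at hk
  exact_mod_cast hk.le

section SpecRad

variable {m : Type*} [Fintype m] [DecidableEq m]

theorem spectrum_transpose {R : Type*} [CommRing R] (A : Matrix m m R) :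
    spectrum R Aᵀ = spectrum R A := by
  ext μ
  simp only [spectrum.mem_iff, Algebra.algebraMap_eq_smul_one]
  rw [← isUnit_transpose (μ • 1 - Aᵀ), transpose_sub, transpose_transpose, transpose_smul,
    transpose_one]

theorem specRad_transpose (M : Matrix m m ℝ) : specRad Mᵀ = specRad M := by
  rw [specRad, transpose_map, spectrum_transpose, specRad]

theorem specRad_nonneg (M : Matrix m m ℝ) : 0 ≤ specRad M :=
  Real.sSup_nonneg fun _ ⟨_, _, hr⟩ => hr ▸ norm_nonneg _

theorem norm_le_specRad {M : Matrix m m ℝ} {μ : ℂ}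
    (hμ : μ ∈ spectrum ℂ (M.map (algebraMap ℝ ℂ))) : ‖μ‖ ≤ specRad M := by
  refine le_csSup ?_ ⟨μ, hμ, rfl⟩
  have := ((Matrix.finite_spectrum (M.map (algebraMap ℝ ℂ))).image (‖·‖)).bddAbove
  simpa [Set.image, eq_comm] using this

theorem spectralRadius_map_le_specRad (M : Matrix m m ℝ) :
    spectralRadius ℂ (M.map (algebraMap ℝ ℂ)) ≤ ENNReal.ofReal (specRad M) :=
  iSup₂_le fun _ hμ => by
    rw [← ENNReal.ofReal_coe_nnreal, coe_nnnorm]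
    exact ENNReal.ofReal_le_ofReal (norm_le_specRad hμ)

section LinftyOpNorm

attribute [local instance] Matrix.linftyOpSeminormedAddCommGroup Matrix.linftyOpNormedRing
  Matrix.linftyOpNormedAlgebra

theorem Matrix.linfty_opNNNorm_map_eq {l n α β : Type*} [Fintype l] [Fintype n]
    [SeminormedAddCommGroup α] [SeminormedAddCommGroup β] (A : Matrix l n α) {f : α → β}
    (hf : ∀ a, ‖f a‖₊ = ‖a‖₊) : ‖A.map f‖₊ = ‖A‖₊ := by
  simp [linfty_opNNNorm_def, hf]

theorem eventually_nnnorm_pow_le_of_specRad_lt {M : Matrix m m ℝ} {c : ℝ≥0}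
    (h : specRad M < c) : ∀ᶠ k : ℕ in atTop, ‖M ^ k‖₊ ≤ c ^ k := by
  have : spectralRadius ℂ (M.map (algebraMap ℝ ℂ)) < c :=
    (spectralRadius_map_le_specRad M).trans_lt
      ((ENNReal.ofReal_lt_coe_iff (specRad_nonneg M)).mpr h)
  filter_upwards [spectrum.eventually_nnnorm_pow_le _ this] with k hk
  rwa [← Matrix.map_pow, linfty_opNNNorm_map_eq _ fun a => by simp] at hk

theorem summable_pow_inv_smul_of_specRad_lt {M : Matrix m m ℝ} {r : ℝ} (h : specRad M < r) :
    Summable fun k => (r⁻¹ • M) ^ k := by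
  obtain ⟨c, hMc, hcr⟩ := exists_between h
  have hc : 0 ≤ c := (specRad_nonneg M).trans hMc.le
  have hr : 0 < r := hc.trans_lt hcr
  refine Summable.of_norm_bounded_eventually_nat
    (summable_geometric_of_lt_one (by positivity) ((div_lt_one hr).mpr hcr)) ?_
  filter_upwards [eventually_nnnorm_pow_le_of_specRad_lt (c := ⟨c, hc⟩) hMc] with k hk
  rw [smul_pow, norm_smul, div_pow, div_eq_inv_mul, norm_pow, norm_inv,
    Real.norm_of_nonneg hr.le, inv_pow]
  gcongr
  exact_mod_cast hk

end LinftyOpNorm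

theorem exists_pos_mulVec_le_smul {M : Matrix m m ℝ} (hM : ∀ i j, 0 ≤ M i j) {r : ℝ}
    (h : specRad M < r) :
    ∃ v : m → ℝ, (∀ i, 0 < v i) ∧ M *ᵥ v ≤ r • v := by
  have hr : 0 < r := (specRad_nonneg M).trans_lt h
  set N := r⁻¹ • M
  have hN : ∀ i j, 0 ≤ N i j := fun i j => mul_nonneg (inv_nonneg.mpr hr.le) (hM i j)
  have hsum := summable_pow_inv_smul_of_specRad_lt h
  set S := ∑' k, N ^ k
  have hS : ∀ i j, 0 ≤ S i j := fun i j =>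
    (Pi.hasSum.mp (Pi.hasSum.mp hsum.hasSum i) j).nonneg fun k => pow_apply_nonneg hN k i j
  have hNS : N * S = S - 1 := by
    have := hsum.one_sub_mul_tsum_pow
    rw [sub_mul, one_mul, sub_eq_iff_eq_add'] at this
    exact eq_sub_of_add_eq this.symm
  set v := S *ᵥ 1
  have hNv : N *ᵥ v = v - 1 := by
    rw [mulVec_mulVec, hNS, sub_mulVec, one_mulVec]
  have hNv_nonneg : ∀ i, 0 ≤ (N *ᵥ v) i := fun i =>
    dotProduct_nonneg_of_nonneg (hN i) fun j => dotProduct_nonneg_of_nonneg (hS j) zero_le_one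
  refine ⟨v, fun i => ?_, ?_⟩
  · have hi := congrFun hNv i
    simp only [Pi.sub_apply, Pi.one_apply] at hi
    linarith [hNv_nonneg i]
  · calc M *ᵥ v = r • (N *ᵥ v) := by rw [smul_mulVec, smul_inv_smul₀ hr.ne']
      _ ≤ r • v := by
        rw [hNv]
        exact smul_le_smul_of_nonneg_left (sub_le_self v zero_le_one) hr.le

end SpecRad

section QuadraticForm

variable {m : Type*} [Fintype m]

theorem sq_mulVec_apply_le {M : Matrix m m ℝ} (hM : ∀ i j, 0 ≤ M i j) {v : m → ℝ}
    (hv : ∀ i, 0 < v i) (x : m → ℝ) (i : m) :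
    (M *ᵥ x) i ^ 2 ≤ (M *ᵥ v) i * (M *ᵥ fun j => x j ^ 2 / v j) i := by
  refine Finset.sum_sq_le_sum_mul_sum_of_sq_le_mul _
    (fun j _ => mul_nonneg (hM i j) (hv j).le)
    (fun j _ => mul_nonneg (hM i j) (div_nonneg (sq_nonneg _) (hv j).le)) fun j _ => le_of_eq ?_
  field_simp [(hv j).ne']

theorem sum_div_mul_sq_mulVec_le {M : Matrix m m ℝ} (hM : ∀ i j, 0 ≤ M i j) {u v : m → ℝ}
    (hu : 0 ≤ u) (hv : ∀ i, 0 < v i) {r s : ℝ} (hr : 0 ≤ r) (hMv : M *ᵥ v ≤ r • v)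
    (hMu : Mᵀ *ᵥ u ≤ s • u) (x : m → ℝ) :
    ∑ i, u i / v i * (M *ᵥ x) i ^ 2 ≤ r * s * ∑ i, u i / v i * x i ^ 2 := by
  set w : m → ℝ := fun j => x j ^ 2 / v j
  have hw : 0 ≤ w := fun j => div_nonneg (sq_nonneg _) (hv j).le
  have hMw : 0 ≤ M *ᵥ w := fun i => dotProduct_nonneg_of_nonneg (hM i) hw
  calc ∑ i, u i / v i * (M *ᵥ x) i ^ 2
      ≤ ∑ i, u i / v i * (r * v i * (M *ᵥ w) i) := by
        gcongr with i
        · exact div_nonneg (hu i) (hv i).le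
        · exact (sq_mulVec_apply_le hM hv x i).trans
            (mul_le_mul_of_nonneg_right (hMv i) (hMw i))
    _ = r * (u ⬝ᵥ (M *ᵥ w)) := by
        rw [dotProduct, Finset.mul_sum]
        refine Finset.sum_congr rfl fun i _ => ?_
        field_simp [(hv i).ne']
    _ = r * ((Mᵀ *ᵥ u) ⬝ᵥ w) := by rw [dotProduct_mulVec, mulVec_transpose]
    _ ≤ r * ((s • u) ⬝ᵥ w) := by gcongr; exact dotProduct_le_dotProduct_of_nonneg_right hMu hw
    _ = r * s * ∑ i, u i / v i * x i ^ 2 := by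
        rw [smul_dotProduct, smul_eq_mul, mul_assoc, dotProduct]
        congr 2
        refine Finset.sum_congr rfl fun i _ => ?_
        simp only [w]; ring

variable [DecidableEq m]

theorem dotProduct_transpose_mul_diagonal_mul_mulVec (M : Matrix m m ℝ) (d x : m → ℝ) :
    x ⬝ᵥ ((Mᵀ * diagonal d * M) *ᵥ x) = ∑ i, d i * (M *ᵥ x) i ^ 2 := by
  rw [← mulVec_mulVec, ← mulVec_mulVec, dotProduct_mulVec, ← mulVec_transpose, transpose_transpose,
    dotProduct]
  simp only [mulVec_diagonal]
  exact Finset.sum_congr rfl fun i _ => by ring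

theorem posDef_neg_transpose_mul_diagonal_mul_sub_diagonal {M : Matrix m m ℝ} {d : m → ℝ}
    (h : ∀ x ≠ 0, ∑ i, d i * (M *ᵥ x) i ^ 2 < ∑ i, d i * x i ^ 2) :
    (-(Mᵀ * diagonal d * M - diagonal d)).PosDef := by
  have hD := isHermitian_diagonal d
  refine .of_dotProduct_mulVec_pos ?_ fun x hx => ?_
  · rw [← conjTranspose_eq_transpose_of_trivial]
    exact ((isHermitian_conjTranspose_mul_mul M hD).sub hD).neg
  · have hI := dotProduct_transpose_mul_diagonal_mul_mulVec 1 d x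
    rw [transpose_one, Matrix.one_mul, Matrix.mul_one, one_mulVec] at hI
    rw [star_trivial, neg_mulVec, dotProduct_neg, sub_mulVec, dotProduct_sub, hI,
      dotProduct_transpose_mul_diagonal_mul_mulVec, neg_sub, sub_pos]
    exact h x hx

end QuadraticForm

theorem stmt1 {n : ℕ} (M : Matrix (Fin n) (Fin n) ℝ)
    (hM : ∀ i j, 0 ≤ M i j) (hρ : specRad M < 1) :
    ∃ P : Matrix (Fin n) (Fin n) ℝ,
      P.IsDiag ∧ (∀ i, 0 < P i i) ∧ (-(Mᵀ * P * M - P)).PosDef := by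
  obtain ⟨r, hρr, hr1⟩ := exists_between hρ
  have hr : 0 ≤ r := (specRad_nonneg M).trans hρr.le
  obtain ⟨v, hv, hMv⟩ := exists_pos_mulVec_le_smul hM hρr
  obtain ⟨u, hu, hMu⟩ := exists_pos_mulVec_le_smul (M := Mᵀ) (fun i j => hM j i)
    (by rwa [specRad_transpose])
  refine ⟨diagonal (u / v), isDiag_diagonal _, fun i => by simpa using div_pos (hu i) (hv i),
    posDef_neg_transpose_mul_diagonal_mul_sub_diagonal fun x hx => ?_⟩
  have hPx : 0 < ∑ i, u i / v i * x i ^ 2 := by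
    obtain ⟨i, hi⟩ := Function.ne_iff.mp hx
    exact Finset.sum_pos' (fun j _ => mul_nonneg (div_pos (hu j) (hv j)).le (sq_nonneg _))
      ⟨i, Finset.mem_univ i, mul_pos (div_pos (hu i) (hv i)) (pow_two_pos_of_ne_zero hi)⟩
  calc ∑ i, u i / v i * (M *ᵥ x) i ^ 2
      ≤ r * r * ∑ i, u i / v i * x i ^ 2 :=
        sum_div_mul_sq_mulVec_le hM (fun i => (hu i).le) hv hr hMv hMu x
    _ < ∑ i, u i / v i * x i ^ 2 := mul_lt_of_lt_one_left hPx (by nlinarith)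
end

section
/- Let M be a nonnegative matrix with ρ(M) < 1 and P ≻ 0 a diagonal matrix with MᵀPM - P ≺ 0 (guaranteed to exist). Then for the SIS update x(k+1) = x(k) + h((I - X(k))B̄ - D)x(k) = (M - hX(k)B̄)x(k) with x(k) ∈ [0,1]^n and M = I - hD + hB̄, the Lyapunov function V(x) = xᵀPx satisfies V(x(k+1)) - V(x(k)) ≤ xᵀ(MᵀPM - P)x. -/
open Matrix Filter

/-! With `s = B̄ x`, the SIS step reads `y_i = (1 - h δ_i) x_i + h (1 - x_i) s_i`, while the
linearised step is `(M x)_i = (1 - h δ_i) x_i + h s_i`. For `x ∈ [0,1]^n` both are nonnegative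
and `y ≤ M x` componentwise, so for the diagonal, nonnegative `P` the quadratic form satisfies
`yᵀ P y ≤ (M x)ᵀ P (M x) = xᵀ Mᵀ P M x`. -/

namespace Matrix

variable {ι : Type*} [Fintype ι]

theorem dotProduct_transpose_mul_mul_mulVec {R : Type*} [CommSemiring R]
    (M P : Matrix ι ι R) (x : ι → R) :
    x ⬝ᵥ (Mᵀ * P * M) *ᵥ x = (M *ᵥ x) ⬝ᵥ P *ᵥ (M *ᵥ x) := by
  rw [← mulVec_mulVec, ← mulVec_mulVec, dotProduct_mulVec, vecMul_transpose]

theorem mulVec_nonneg {R : Type*} [Semiring R] [PartialOrder R] [IsOrderedRing R]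
    {A : Matrix ι ι R} (hA : ∀ i j, 0 ≤ A i j) {x : ι → R} (hx : 0 ≤ x) : 0 ≤ A *ᵥ x :=
  fun i => Finset.sum_nonneg fun j _ => mul_nonneg (hA i j) (hx j)

theorem IsDiag.dotProduct_mulVec_self [DecidableEq ι] {P : Matrix ι ι ℝ} (hP : P.IsDiag)
    (v : ι → ℝ) : v ⬝ᵥ P *ᵥ v = ∑ i, P i i * v i ^ 2 := by
  conv_lhs => rw [← hP.diagonal_diag]
  simp only [dotProduct, mulVec_diagonal, diag_apply]
  exact Finset.sum_congr rfl fun i _ => by ring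

theorem IsDiag.dotProduct_mulVec_self_le [DecidableEq ι] {P : Matrix ι ι ℝ} (hP : P.IsDiag)
    (hP0 : ∀ i, 0 ≤ P i i) {v w : ι → ℝ} (hv : 0 ≤ v) (hvw : v ≤ w) :
    v ⬝ᵥ P *ᵥ v ≤ w ⬝ᵥ P *ᵥ w := by
  rw [hP.dotProduct_mulVec_self, hP.dotProduct_mulVec_self]
  gcongr with i
  · exact hP0 i
  · exact hv i
  · exact hvw i

end Matrix

section SIS

variable {ι : Type*} [Fintype ι] [DecidableEq ι] (h : ℝ) (β : ι → ι → ℝ) (δ x : ι → ℝ)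

theorem sisLinearStep_apply (i : ι) :
    ((1 - h • diagonal δ + h • of β) *ᵥ x) i = (1 - h * δ i) * x i + h * (of β *ᵥ x) i := by
  simp only [add_mulVec, sub_mulVec, one_mulVec, smul_mulVec, mulVec_diagonal,
    Pi.add_apply, Pi.sub_apply, Pi.smul_apply, smul_eq_mul]
  ring

theorem sisStep_apply (i : ι) :
    ((1 - h • diagonal δ + h • of β - h • (diagonal x * of β)) *ᵥ x) i =
      (1 - h * δ i) * x i + h * (1 - x i) * (of β *ᵥ x) i := by
  rw [sub_mulVec, Pi.sub_apply, sisLinearStep_apply, smul_mulVec, ← mulVec_mulVec,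
    Pi.smul_apply, mulVec_diagonal, smul_eq_mul]
  ring

variable {h β δ x}

theorem sisStep_nonneg (hh : 0 ≤ h) (hβ0 : ∀ i j, 0 ≤ β i j) (hδ1 : ∀ i, h * δ i ≤ 1)
    (hx : ∀ i, x i ∈ Set.Icc (0 : ℝ) 1) :
    0 ≤ (1 - h • diagonal δ + h • of β - h • (diagonal x * of β)) *ᵥ x := by
  intro i
  have hs := mulVec_nonneg (A := of β) hβ0 (fun j => (hx j).1) i
  rw [sisStep_apply]
  exact add_nonneg (mul_nonneg (sub_nonneg.2 (hδ1 i)) (hx i).1)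
    (mul_nonneg (mul_nonneg hh (sub_nonneg.2 (hx i).2)) hs)

theorem sisStep_le_sisLinearStep (hh : 0 ≤ h) (hβ0 : ∀ i j, 0 ≤ β i j)
    (hx : ∀ i, x i ∈ Set.Icc (0 : ℝ) 1) :
    (1 - h • diagonal δ + h • of β - h • (diagonal x * of β)) *ᵥ x ≤
      (1 - h • diagonal δ + h • of β) *ᵥ x := by
  intro i
  have hs := mulVec_nonneg (A := of β) hβ0 (fun j => (hx j).1) i
  rw [sisStep_apply, sisLinearStep_apply]
  linarith [mul_nonneg (mul_nonneg hh (hx i).1) hs]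

end SIS

theorem stmt8_general {n : ℕ} (h : ℝ) (hh : 0 < h)
    (β : Fin n → Fin n → ℝ) (δ : Fin n → ℝ)
    (hβ0 : ∀ i j, 0 ≤ β i j)
    (hδ1 : ∀ i, h * δ i ≤ 1)
    (M P : Matrix (Fin n) (Fin n) ℝ)
    (hMdef : M = 1 - h • Matrix.diagonal δ + h • Matrix.of β)
    (hPdiag : P.IsDiag) (hP : P.PosDef)
    (x : Fin n → ℝ) (hx : ∀ i, x i ∈ Set.Icc (0:ℝ) 1)
    (y : Fin n → ℝ)
    (hy : y = (M - h • (Matrix.diagonal x * Matrix.of β)).mulVec x) :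
    y ⬝ᵥ P.mulVec y - x ⬝ᵥ P.mulVec x ≤ x ⬝ᵥ (Mᵀ * P * M - P).mulVec x := by
  rw [hy, sub_mulVec (Mᵀ * P * M), dotProduct_sub, dotProduct_transpose_mul_mul_mulVec]
  subst hMdef
  gcongr
  exact hPdiag.dotProduct_mulVec_self_le (fun _ => hP.diag_pos.le)
    (sisStep_nonneg hh.le hβ0 hδ1 hx) (sisStep_le_sisLinearStep hh.le hβ0 hx)

theorem stmt8 {n : ℕ} (h : ℝ) (hh : 0 < h)
    (β : Fin n → Fin n → ℝ) (δ : Fin n → ℝ)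
    (hβ0 : ∀ i j, 0 ≤ β i j) (hδ0 : ∀ i, 0 ≤ δ i)
    (hδ1 : ∀ i, h * δ i ≤ 1) (hβ1 : ∀ i, h * ∑ j, β i j ≤ 1)
    (M P : Matrix (Fin n) (Fin n) ℝ)
    (hMdef : M = 1 - h • Matrix.diagonal δ + h • Matrix.of β)
    (hρ : specRad M < 1) (hPdiag : P.IsDiag) (hP : P.PosDef)
    (hLyap : (-(Mᵀ * P * M - P)).PosDef)
    (x : Fin n → ℝ) (hx : ∀ i, x i ∈ Set.Icc (0:ℝ) 1)
    (y : Fin n → ℝ)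
    (hy : y = (M - h • (Matrix.diagonal x * Matrix.of β)).mulVec x) :
    y ⬝ᵥ P.mulVec y - x ⬝ᵥ P.mulVec x ≤ x ⬝ᵥ (Mᵀ * P * M - P).mulVec x :=
  stmt8_general h hh β δ hβ0 hδ1 M P hMdef hPdiag hP x hx y hy
end

section
/- For the p-periodic discrete-time SIS system under strong connectivity, if the disease-free equilibrium is asymptotically stable, then ρ(M(k+p-1)⋯M(k)) ≤ 1 (equivalently, by index-independence of the spectrum, for all k). -/
open Matrix Filter

/-!
Along any SIS trajectory `x(k+1) = (M(k) - h X(k) B(k)) x(k)` whose entries stay below `b`, the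
nonnegative matrices `M(k) - h X(k) B(k)` dominate `(1 - b) M(k)` entrywise, so
`x(m) ≥ (1 - b)^m M(m-1)⋯M(0) x(0)`. Stability keeps a trajectory started at a small constant
vector below any prescribed `b`, so the row sums of the monodromy powers `(M(p-1)⋯M(0))^m` grow at
most like `(1 - b)^(-mp)`. Bounding the spectrum by the `ℓ^∞` operator norm, every eigenvalue `μ`
satisfies `|μ| (1 - b)^p ≤ 1`; letting `b → 0` gives `|μ| ≤ 1`. Cyclically permuting the factors of
the monodromy matrix only changes its spectrum at `0`, which moves the bound to every start `k`.
-/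

open Topology

lemma le_one_of_forall_pow_le {x C : ℝ} (h : ∀ m : ℕ, x ^ m ≤ C) : x ≤ 1 := by
  by_contra! hx
  obtain ⟨m, hm⟩ := pow_unbounded_of_one_lt C hx
  exact (h m).not_gt hm

lemma le_one_of_forall_mul_one_sub_pow_le {c : ℝ} (p : ℕ)
    (hc : ∀ b : ℝ, 0 < b → b < 1 → c * (1 - b) ^ p ≤ 1) : c ≤ 1 := by
  have hlim : Tendsto (fun b : ℝ => c * (1 - b) ^ p) (𝓝[>] 0) (𝓝 c) := by
    have hcont : Continuous fun b : ℝ => c * (1 - b) ^ p := by fun_prop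
    simpa using (hcont.tendsto 0).mono_left nhdsWithin_le_nhds
  refine le_of_tendsto hlim ?_
  filter_upwards [eventually_nhdsWithin_of_eventually_nhds (eventually_lt_nhds one_pos),
    self_mem_nhdsWithin] with b hb1 hb0
  exact hc b hb0 hb1

lemma mulVec_mono_of_nonneg {m l R : Type*} [Fintype l] [Semiring R] [PartialOrder R]
    [IsOrderedRing R] {A : Matrix m l R} (hA : ∀ i j, 0 ≤ A i j) {u v : l → R} (huv : u ≤ v) :
    A *ᵥ u ≤ A *ᵥ v :=
  fun i => dotProduct_le_dotProduct_of_nonneg_left huv (hA i)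

section Monodromy

variable {n : ℕ} (M : ℕ → Matrix (Fin n) (Fin n) ℝ)

lemma mono_zero (k : ℕ) : mono 0 M k = 1 := rfl

lemma mono_succ (m k : ℕ) : mono (m + 1) M k = M (k + m) * mono m M k := by
  rw [mono, List.range_succ, List.foldl_append, List.foldl_cons, List.foldl_nil, ← mono]

lemma mono_add (a b k : ℕ) : mono (a + b) M k = mono b M (k + a) * mono a M k := by
  induction b with
  | zero => rw [Nat.add_zero, mono_zero, one_mul]
  | succ b ih => rw [← Nat.add_assoc, mono_succ, ih, mono_succ, Nat.add_assoc, mul_assoc]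

lemma mono_one (k : ℕ) : mono 1 M k = M k := by
  rw [mono_succ, mono_zero, mul_one, Nat.add_zero]

variable {M}

lemma mono_nonneg (hM : ∀ k i j, 0 ≤ M k i j) (m k : ℕ) (i j : Fin n) : 0 ≤ mono m M k i j := by
  induction m generalizing i j with
  | zero => rw [mono_zero, one_apply]; split_ifs <;> norm_num
  | succ m ih =>
    rw [mono_succ, mul_apply]
    exact Finset.sum_nonneg fun l _ => mul_nonneg (hM _ _ _) (ih _ _)

variable {p : ℕ} (hper : ∀ k, M (k + p) = M k)
include hper

lemma mono_add_period (m k : ℕ) : mono m M (k + p) = mono m M k := by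
  induction m with
  | zero => rfl
  | succ m ih => rw [mono_succ, mono_succ, ih, Nat.add_right_comm, hper]

lemma mono_mul_period (q m : ℕ) : mono q M (m * p) = mono q M 0 := by
  induction m with
  | zero => rw [Nat.zero_mul]
  | succ m ih => rw [Nat.succ_mul, mono_add_period hper, ih]

lemma mono_period_pow (m : ℕ) : mono p M 0 ^ m = mono (m * p) M 0 := by
  induction m with
  | zero => rw [pow_zero, Nat.zero_mul, mono_zero]
  | succ m ih =>
    rw [pow_succ', ih, Nat.succ_mul, mono_add, Nat.zero_add, mono_mul_period hper]

lemma spectrum_mono_succ_diff_zero (hp : 0 < p) (k : ℕ) :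
    spectrum ℂ ((mono p M (k + 1)).map (algebraMap ℝ ℂ)) \ {0} =
      spectrum ℂ ((mono p M k).map (algebraMap ℝ ℂ)) \ {0} := by
  obtain ⟨q, rfl⟩ : ∃ q, p = q + 1 := ⟨p - 1, by omega⟩
  have hleft : mono (q + 1) M (k + 1) = M k * mono q M (k + 1) := by
    rw [mono_succ, show k + 1 + q = k + (q + 1) by omega, hper]
  have hright : mono (q + 1) M k = mono q M (k + 1) * M k := by
    rw [Nat.add_comm, mono_add, mono_one]
  rw [hleft, hright, Matrix.map_mul, Matrix.map_mul]
  exact spectrum.nonzero_mul_comm _ _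

lemma spectrum_mono_diff_zero (hp : 0 < p) (k : ℕ) :
    spectrum ℂ ((mono p M k).map (algebraMap ℝ ℂ)) \ {0} =
      spectrum ℂ ((mono p M 0).map (algebraMap ℝ ℂ)) \ {0} := by
  induction k with
  | zero => rfl
  | succ k ih => rw [spectrum_mono_succ_diff_zero hper hp, ih]

end Monodromy

section RowSums

attribute [local instance] Matrix.linftyOpNormedRing Matrix.linftyOpNormedAlgebra

variable {n : ℕ}

lemma norm_map_le_of_sum_le {A : Matrix (Fin n) (Fin n) ℝ} {c : ℝ} (hc : 0 ≤ c)
    (hA : ∀ i j, 0 ≤ A i j) (hsum : ∀ i, ∑ j, A i j ≤ c) :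
    ‖A.map (algebraMap ℝ ℂ)‖ ≤ c := by
  rw [linfty_opNorm_def, ← Real.coe_toNNReal c hc, NNReal.coe_le_coe]
  refine Finset.sup_le fun i _ => ?_
  rw [← NNReal.coe_le_coe, NNReal.coe_sum, Real.coe_toNNReal c hc]
  convert hsum i using 2 with j
  simp [abs_of_nonneg (hA i j)]

lemma norm_le_of_mem_spectrum_of_sum_le {A : Matrix (Fin n) (Fin n) ℝ} {c : ℝ} (hc : 0 ≤ c)
    (hA : ∀ i j, 0 ≤ A i j) (hsum : ∀ i, ∑ j, A i j ≤ c) {μ : ℂ}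
    (hμ : μ ∈ spectrum ℂ (A.map (algebraMap ℝ ℂ))) : ‖μ‖ ≤ c := by
  have hone : ‖(1 : Matrix (Fin n) (Fin n) ℂ)‖ ≤ 1 := by
    have h1 := norm_map_le_of_sum_le (A := (1 : Matrix (Fin n) (Fin n) ℝ)) zero_le_one
      (fun i j => by rw [one_apply]; split_ifs <;> norm_num) fun i => by simp [one_apply]
    rwa [Matrix.map_one _ (map_zero _) (map_one _)] at h1
  calc ‖μ‖ ≤ ‖A.map (algebraMap ℝ ℂ)‖ * ‖(1 : Matrix (Fin n) (Fin n) ℂ)‖ := by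
        simpa using spectrum.subset_closedBall_norm_mul (𝕜 := ℂ) _ hμ
    _ ≤ c * 1 := mul_le_mul (norm_map_le_of_sum_le hc hA hsum) hone (norm_nonneg _) hc
    _ = c := mul_one c

end RowSums

lemma norm_mul_pow_le_one_of_mem_spectrum_mono {n p : ℕ} {M : ℕ → Matrix (Fin n) (Fin n) ℝ}
    (hper : ∀ k, M (k + p) = M k) (hM : ∀ k i j, 0 ≤ M k i j) {r C : ℝ} (hr : 0 < r)
    (hC : 0 ≤ C) (hgrowth : ∀ m i, r ^ m * ∑ j, mono m M 0 i j ≤ C) {μ : ℂ}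
    (hμ : μ ∈ spectrum ℂ ((mono p M 0).map (algebraMap ℝ ℂ))) : ‖μ‖ * r ^ p ≤ 1 := by
  refine le_one_of_forall_pow_le (C := C) fun m => ?_
  have hpow : μ ^ m ∈ spectrum ℂ ((mono (m * p) M 0).map (algebraMap ℝ ℂ)) := by
    rw [← mono_period_pow hper, ← RingHom.mapMatrix_apply, map_pow]
    exact spectrum.pow_image_subset _ m ⟨μ, hμ, rfl⟩
  have hrm : 0 < r ^ (m * p) := pow_pos hr _
  have hnorm : ‖μ ^ m‖ ≤ C / r ^ (m * p) :=
    norm_le_of_mem_spectrum_of_sum_le (div_nonneg hC hrm.le) (mono_nonneg hM _ 0)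
      (fun i => (le_div_iff₀' hrm).2 (hgrowth _ i)) hpow
  rw [mul_pow, ← pow_mul, mul_comm p m, ← norm_pow]
  exact (le_div_iff₀ hrm).1 hnorm

section Dynamics

def sisOrbit {n : ℕ} (h : ℝ) (β : ℕ → Fin n → Fin n → ℝ) (δ : ℕ → Fin n → ℝ) (x₀ : Fin n → ℝ) :
    ℕ → Fin n → ℝ
  | 0 => x₀
  | k + 1 => fun i => sisOrbit h β δ x₀ k i + h * ((1 - sisOrbit h β δ x₀ k i) *
      (∑ j, β k i j * sisOrbit h β δ x₀ k j) - δ k i * sisOrbit h β δ x₀ k i)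

variable {n : ℕ} {h : ℝ} {β : ℕ → Fin n → Fin n → ℝ} {δ : ℕ → Fin n → ℝ}
  {Mm : ℕ → Matrix (Fin n) (Fin n) ℝ}

lemma sisdyn_sisOrbit (x₀ : Fin n → ℝ) : SISdyn h β δ (sisOrbit h β δ x₀) := fun _ _ => rfl

lemma mulVec_apply_of_eq_sis (hM : ∀ k, Mm k = 1 - h • diagonal (δ k) + h • of (β k))
    (k : ℕ) (t : Fin n → ℝ) (i : Fin n) :
    (Mm k *ᵥ t) i = (1 - h * δ k i) * t i + h * ∑ j, β k i j * t j := by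
  rw [hM, add_mulVec, sub_mulVec, smul_mulVec, smul_mulVec, one_mulVec]
  simp only [Pi.add_apply, Pi.sub_apply, Pi.smul_apply, smul_eq_mul, mulVec_diagonal]
  simp only [mulVec, dotProduct, of_apply]
  ring

lemma apply_nonneg_of_eq_sis (hM : ∀ k, Mm k = 1 - h • diagonal (δ k) + h • of (β k))
    (hh : 0 < h) (hβ0 : ∀ k i j, 0 ≤ β k i j) (hδ1 : ∀ k i, h * δ k i ≤ 1) (k : ℕ) (i j : Fin n) :
    0 ≤ Mm k i j := by
  have hβ : 0 ≤ h * β k i j := mul_nonneg hh.le (hβ0 k i j)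
  simp only [hM, Matrix.add_apply, Matrix.sub_apply, Matrix.smul_apply, one_apply, diagonal_apply,
    of_apply, smul_eq_mul]
  split_ifs with hij
  · subst hij; linarith [hδ1 k i]
  · linarith

lemma SISdyn.succ_eq_mulVec_sub {x : ℕ → Fin n → ℝ} (hx : SISdyn h β δ x)
    (hM : ∀ k, Mm k = 1 - h • diagonal (δ k) + h • of (β k)) (k : ℕ) (i : Fin n) :
    x (k + 1) i = (Mm k *ᵥ x k) i - h * x k i * ∑ j, β k i j * x k j := by
  rw [hx, mulVec_apply_of_eq_sis hM]
  ring

lemma SISdyn.mem_Icc {x : ℕ → Fin n → ℝ} (hx : SISdyn h β δ x) (hh : 0 < h)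
    (hβ0 : ∀ k i j, 0 ≤ β k i j) (hδ0 : ∀ k i, 0 ≤ δ k i) (hδ1 : ∀ k i, h * δ k i ≤ 1)
    (hβ1 : ∀ k i, h * ∑ j, β k i j ≤ 1) (hx0 : ∀ i, x 0 i ∈ Set.Icc (0 : ℝ) 1) (k : ℕ) :
    ∀ i, x k i ∈ Set.Icc (0 : ℝ) 1 := by
  induction k with
  | zero => exact hx0
  | succ k ih =>
    intro i
    obtain ⟨hxi0, hxi1⟩ := ih i
    set S := ∑ j, β k i j * x k j
    have hS0 : 0 ≤ h * S :=
      mul_nonneg hh.le (Finset.sum_nonneg fun j _ => mul_nonneg (hβ0 k i j) (ih j).1)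
    have hS1 : h * S ≤ 1 := by
      refine le_trans (mul_le_mul_of_nonneg_left ?_ hh.le) (hβ1 k i)
      exact Finset.sum_le_sum fun j _ => mul_le_of_le_one_right (hβ0 k i j) (ih j).2
    have hstep : x (k + 1) i = (1 - h * δ k i) * x k i + (1 - x k i) * (h * S) := by
      rw [hx]; ring
    have hδi : 0 ≤ h * δ k i := mul_nonneg hh.le (hδ0 k i)
    rw [hstep]
    constructor
    · nlinarith [hδ1 k i]
    · nlinarith

lemma SISdyn.one_sub_mul_mulVec_le {x : ℕ → Fin n → ℝ} (hx : SISdyn h β δ x)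
    (hM : ∀ k, Mm k = 1 - h • diagonal (δ k) + h • of (β k)) (hh : 0 < h)
    (hβ0 : ∀ k i j, 0 ≤ β k i j) (hδ1 : ∀ k i, h * δ k i ≤ 1) {b : ℝ} {k : ℕ}
    (hbd : ∀ j, 0 ≤ x k j ∧ x k j ≤ b) (i : Fin n) :
    (1 - b) * (Mm k *ᵥ x k) i ≤ x (k + 1) i := by
  set S := ∑ j, β k i j * x k j
  have hS0 : 0 ≤ h * S :=
    mul_nonneg hh.le (Finset.sum_nonneg fun j _ => mul_nonneg (hβ0 k i j) (hbd j).1)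
  have hMS : h * S ≤ (Mm k *ᵥ x k) i := by
    rw [mulVec_apply_of_eq_sis hM]
    nlinarith [hδ1 k i, (hbd i).1]
  have hb : 0 ≤ b := (hbd i).1.trans (hbd i).2
  -- the infection loss `h xᵢ Sᵢ` is at most `b h Sᵢ ≤ b (M x)ᵢ`
  rw [hx.succ_eq_mulVec_sub hM]
  nlinarith [mul_le_mul_of_nonneg_left hMS hb, mul_le_mul_of_nonneg_right (hbd i).2 hS0]

lemma SISdyn.one_sub_pow_mul_mono_mulVec_le {x : ℕ → Fin n → ℝ} (hx : SISdyn h β δ x)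
    (hM : ∀ k, Mm k = 1 - h • diagonal (δ k) + h • of (β k)) (hh : 0 < h)
    (hβ0 : ∀ k i j, 0 ≤ β k i j) (hδ1 : ∀ k i, h * δ k i ≤ 1) {b : ℝ} (hb : b ≤ 1)
    (hbd : ∀ k j, 0 ≤ x k j ∧ x k j ≤ b) (m : ℕ) :
    (1 - b) ^ m • (mono m Mm 0 *ᵥ x 0) ≤ x m := by
  induction m with
  | zero => simp [mono_zero]
  | succ m ih =>
    intro i
    calc ((1 - b) ^ (m + 1) • (mono (m + 1) Mm 0 *ᵥ x 0)) i
        = (1 - b) * (Mm m *ᵥ ((1 - b) ^ m • (mono m Mm 0 *ᵥ x 0))) i := by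
          rw [mono_succ, Nat.zero_add, ← mulVec_mulVec, mulVec_smul, Pi.smul_apply,
            Pi.smul_apply, smul_eq_mul, smul_eq_mul, pow_succ']
          ring
      _ ≤ (1 - b) * (Mm m *ᵥ x m) i :=
          mul_le_mul_of_nonneg_left
            (mulVec_mono_of_nonneg (apply_nonneg_of_eq_sis hM hh hβ0 hδ1 m) ih i) (sub_nonneg.2 hb)
      _ ≤ x (m + 1) i := hx.one_sub_mul_mulVec_le hM hh hβ0 hδ1 (hbd m) i

/-- The bound is `C = b / s`, read off from the trajectory started at the constant vector `s`,
which stability keeps below `b`. -/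
lemma exists_one_sub_pow_mul_sum_mono_le (hM : ∀ k, Mm k = 1 - h • diagonal (δ k) + h • of (β k))
    (hh : 0 < h) (hβ0 : ∀ k i j, 0 ≤ β k i j) (hδ0 : ∀ k i, 0 ≤ δ k i)
    (hδ1 : ∀ k i, h * δ k i ≤ 1) (hβ1 : ∀ k i, h * ∑ j, β k i j ≤ 1)
    (hstab : ∀ ε > (0:ℝ), ∃ d > (0:ℝ), ∀ x : ℕ → Fin n → ℝ, SISdyn h β δ x →
        (∀ i, x 0 i ∈ Set.Icc (0:ℝ) 1) → ‖x 0‖ < d → ∀ k, ‖x k‖ < ε)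
    {b : ℝ} (hb0 : 0 < b) (hb1 : b < 1) :
    ∃ C, 0 ≤ C ∧ ∀ m i, (1 - b) ^ m * ∑ j, mono m Mm 0 i j ≤ C := by
  obtain ⟨d, hd0, hd⟩ := hstab b hb0
  set s := min (d / 2) 1
  have hs0 : 0 < s := lt_min (half_pos hd0) one_pos
  set x := sisOrbit h β δ (fun _ => s)
  have hx : SISdyn h β δ x := sisdyn_sisOrbit _
  have hx0 : ∀ i, x 0 i ∈ Set.Icc (0 : ℝ) 1 := fun _ => ⟨hs0.le, min_le_right _ _⟩
  have hsmall : ‖x 0‖ < d := calc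
    ‖x 0‖ ≤ ‖s‖ := pi_norm_const_le s
    _ = s := Real.norm_of_nonneg hs0.le
    _ < d := (min_le_left _ _).trans_lt (half_lt_self hd0)
  have hbd : ∀ k i, 0 ≤ x k i ∧ x k i ≤ b := fun k i =>
    ⟨(hx.mem_Icc hh hβ0 hδ0 hδ1 hβ1 hx0 k i).1,
      (le_abs_self _).trans ((norm_le_pi_norm (x k) i).trans (hd x hx hx0 hsmall k).le)⟩
  refine ⟨b / s, by positivity, fun m i => ?_⟩
  rw [le_div_iff₀ hs0]
  calc (1 - b) ^ m * (∑ j, mono m Mm 0 i j) * s = ((1 - b) ^ m • (mono m Mm 0 *ᵥ x 0)) i := by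
        simp only [Pi.smul_apply, smul_eq_mul, mulVec, dotProduct, Finset.sum_mul, mul_assoc]
        rfl
    _ ≤ x m i := hx.one_sub_pow_mul_mono_mulVec_le hM hh hβ0 hδ1 hb1.le hbd m i
    _ ≤ b := (hbd m i).2

end Dynamics

theorem stmt10_general {n : ℕ} (p : ℕ) (hp : 0 < p) (h : ℝ) (hh : 0 < h)
    (β : ℕ → Fin n → Fin n → ℝ) (δ : ℕ → Fin n → ℝ)
    (hperβ : ∀ k, β (k + p) = β k) (hperδ : ∀ k, δ (k + p) = δ k)
    (hβ0 : ∀ k i j, 0 ≤ β k i j) (hδ0 : ∀ k i, 0 ≤ δ k i)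
    (hδ1 : ∀ k i, h * δ k i ≤ 1) (hβ1 : ∀ k i, h * ∑ j, β k i j ≤ 1)
    (Mm : ℕ → Matrix (Fin n) (Fin n) ℝ)
    (hM : ∀ k, Mm k = 1 - h • Matrix.diagonal (δ k) + h • Matrix.of (β k))
    (hstab : ∀ ε > (0:ℝ), ∃ d > (0:ℝ), ∀ x : ℕ → Fin n → ℝ, SISdyn h β δ x →
        (∀ i, x 0 i ∈ Set.Icc (0:ℝ) 1) → ‖x 0‖ < d → ∀ k, ‖x k‖ < ε) :
    ∀ k, specRad (mono p Mm k) ≤ 1 := by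
  have hper : ∀ k, Mm (k + p) = Mm k := fun k => by rw [hM, hM, hperβ, hperδ]
  intro k
  refine Real.sSup_le ?_ zero_le_one
  rintro _ ⟨μ, hμ, rfl⟩
  rcases eq_or_ne μ 0 with rfl | hμ0
  · simp
  have hμ' : μ ∈ spectrum ℂ ((mono p Mm 0).map (algebraMap ℝ ℂ)) :=
    (spectrum_mono_diff_zero hper hp k ▸ Set.mem_sdiff_singleton.2 ⟨hμ, hμ0⟩).1
  refine le_one_of_forall_mul_one_sub_pow_le p fun b hb0 hb1 => ?_
  obtain ⟨C, hC0, hC⟩ :=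
    exists_one_sub_pow_mul_sum_mono_le hM hh hβ0 hδ0 hδ1 hβ1 hstab hb0 hb1
  exact norm_mul_pow_le_one_of_mem_spectrum_mono hper (apply_nonneg_of_eq_sis hM hh hβ0 hδ1)
    (by linarith) hC0 hC hμ'

theorem stmt10 {n : ℕ} (p : ℕ) (hp : 0 < p) (h : ℝ) (hh : 0 < h)
    (β : ℕ → Fin n → Fin n → ℝ) (δ : ℕ → Fin n → ℝ)
    (hperβ : ∀ k, β (k + p) = β k) (hperδ : ∀ k, δ (k + p) = δ k)
    (hβ0 : ∀ k i j, 0 ≤ β k i j) (hδ0 : ∀ k i, 0 ≤ δ k i)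
    (hδ1 : ∀ k i, h * δ k i ≤ 1) (hβ1 : ∀ k i, h * ∑ j, β k i j ≤ 1)
    (hirr : ∀ k, MatIrreducible (Matrix.of (β k)))
    (Mm : ℕ → Matrix (Fin n) (Fin n) ℝ)
    (hM : ∀ k, Mm k = 1 - h • Matrix.diagonal (δ k) + h • Matrix.of (β k))
    (hstab : ∀ ε > (0:ℝ), ∃ d > (0:ℝ), ∀ x : ℕ → Fin n → ℝ, SISdyn h β δ x →
        (∀ i, x 0 i ∈ Set.Icc (0:ℝ) 1) → ‖x 0‖ < d → ∀ k, ‖x k‖ < ε)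
    (hattr : ∃ r > (0:ℝ), ∀ x : ℕ → Fin n → ℝ, SISdyn h β δ x →
        (∀ i, x 0 i ∈ Set.Icc (0:ℝ) 1) → ‖x 0‖ < r →
        Filter.Tendsto x Filter.atTop (nhds 0)) :
    ∀ k, specRad (mono p Mm k) ≤ 1 :=
  stmt10_general p hp h hh β δ hperβ hperδ hβ0 hδ0 hδ1 hβ1 Mm hM hstab
end

section
/- For the p-periodic discrete-time SIS system with controlled healing rates δ_i(k) = Σ_j β̄_ij(k) + γ_i, where γ_i > 0 and h(Σ_j β̄_ij(k) + γ_i) ≤ 1 for all i and k, the disease-free equilibrium x = 0 is globally exponentially stable on [0,1]^n. -/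
open Matrix Filter

/-!
With the controlled healing rate `δ_i = Σ_j β_ij + γ_i`, one SIS step is
`x_i ↦ (1 - h δ_i) x_i + h (1 - x_i) Σ_j β_ij x_j`. The condition `h δ_i ≤ 1` makes both
coefficients nonnegative, so `[0,1]^n` is invariant, and bounding `Σ_j β_ij x_j` by
`(Σ_j β_ij) ‖x‖` shows that every coordinate of the next state is at most `(1 - h γ_i) ‖x‖`:
the infection pressure is exactly cancelled by the extra healing. Hence the sup norm contracts
by the factor `1 - h min_i γ_i < 1` at every step, whatever the (periodic) infection rates.
-/

section SISStep

variable {ι : Type*} [Fintype ι] (h : ℝ) (b : ι → ι → ℝ) (γ : ι → ℝ) (y : ι → ℝ)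

def sisStep : ι → ℝ :=
  fun i => y i + h * ((1 - y i) * (∑ j, b i j * y j) - ((∑ j, b i j) + γ i) * y i)

theorem sisStep_eq (i : ι) :
    sisStep h b γ y i =
      (1 - h * ((∑ j, b i j) + γ i)) * y i + h * (1 - y i) * ∑ j, b i j * y j := by
  rw [sisStep]; ring

variable {h b γ y}

theorem sisStep_mem_Icc (hh : 0 ≤ h) (hb : ∀ i j, 0 ≤ b i j) (hγ : ∀ i, 0 ≤ γ i)
    (hbound : ∀ i, h * ((∑ j, b i j) + γ i) ≤ 1) (hy : ∀ i, y i ∈ Set.Icc (0 : ℝ) 1) (i : ι) :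
    sisStep h b γ y i ∈ Set.Icc (0 : ℝ) 1 := by
  obtain ⟨hy0, hy1⟩ := hy i
  have hc : 0 ≤ 1 - h * ((∑ j, b i j) + γ i) := by linarith [hbound i]
  have hw : 0 ≤ h * (1 - y i) := mul_nonneg hh (by linarith)
  have hS0 : 0 ≤ ∑ j, b i j * y j := Finset.sum_nonneg fun j _ => mul_nonneg (hb i j) (hy j).1
  have hSB : ∑ j, b i j * y j ≤ ∑ j, b i j :=
    Finset.sum_le_sum fun j _ => mul_le_of_le_one_right (hb i j) (hy j).2
  have hB0 : 0 ≤ ∑ j, b i j := Finset.sum_nonneg fun j _ => hb i j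
  have hhγ : 0 ≤ h * γ i := mul_nonneg hh (hγ i)
  rw [sisStep_eq]
  constructor
  · exact add_nonneg (mul_nonneg hc hy0) (mul_nonneg hw hS0)
  · nlinarith [mul_le_mul_of_nonneg_left hy1 hc, mul_le_mul_of_nonneg_left hSB hw,
      mul_nonneg (mul_nonneg hh hy0) hB0]

theorem sisStep_le_mul_norm (hh : 0 ≤ h) (hb : ∀ i j, 0 ≤ b i j)
    (hbound : ∀ i, h * ((∑ j, b i j) + γ i) ≤ 1) (hy : ∀ i, y i ∈ Set.Icc (0 : ℝ) 1) (i : ι) :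
    sisStep h b γ y i ≤ (1 - h * γ i) * ‖y‖ := by
  have hle_norm : ∀ j, y j ≤ ‖y‖ := fun j => (le_abs_self _).trans (norm_le_pi_norm y j)
  have hc : 0 ≤ 1 - h * ((∑ j, b i j) + γ i) := by linarith [hbound i]
  have hw : 0 ≤ h * (1 - y i) := mul_nonneg hh (by linarith [(hy i).2])
  have hS : ∑ j, b i j * y j ≤ (∑ j, b i j) * ‖y‖ := by
    rw [Finset.sum_mul]
    exact Finset.sum_le_sum fun j _ => mul_le_mul_of_nonneg_left (hle_norm j) (hb i j)
  have hslack : 0 ≤ h * y i * ((∑ j, b i j) * ‖y‖) :=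
    mul_nonneg (mul_nonneg hh (hy i).1)
      (mul_nonneg (Finset.sum_nonneg fun j _ => hb i j) (norm_nonneg y))
  rw [sisStep_eq]
  nlinarith [mul_le_mul_of_nonneg_left (hle_norm i) hc, mul_le_mul_of_nonneg_left hS hw]

theorem norm_sisStep_le {g : ℝ} (hh : 0 ≤ h) (hb : ∀ i j, 0 ≤ b i j) (hγ : ∀ i, 0 ≤ γ i)
    (hg : ∀ i, g ≤ γ i) (hbound : ∀ i, h * ((∑ j, b i j) + γ i) ≤ 1)
    (hy : ∀ i, y i ∈ Set.Icc (0 : ℝ) 1) :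
    ‖sisStep h b γ y‖ ≤ max 0 (1 - h * g) * ‖y‖ := by
  refine (pi_norm_le_iff_of_nonneg (by positivity)).2 fun i => ?_
  rw [Real.norm_eq_abs, abs_of_nonneg (sisStep_mem_Icc hh hb hγ hbound hy i).1]
  calc sisStep h b γ y i ≤ (1 - h * γ i) * ‖y‖ := sisStep_le_mul_norm hh hb hbound hy i
    _ ≤ max 0 (1 - h * g) * ‖y‖ := by
      gcongr
      exact le_max_of_le_right (by nlinarith [hg i])

end SISStep

theorem Finite.exists_pos_forall_le {ι : Type*} [Finite ι] {γ : ι → ℝ} (hγ : ∀ i, 0 < γ i) :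
    ∃ g > 0, ∀ i, g ≤ γ i := by
  cases isEmpty_or_nonempty ι
  · exact ⟨1, one_pos, isEmptyElim⟩
  · obtain ⟨i₀, hi₀⟩ := Finite.exists_min γ
    exact ⟨γ i₀, hγ i₀, hi₀⟩

namespace SISdyn

variable {n : ℕ} {h : ℝ} {β : ℕ → Fin n → Fin n → ℝ} {γ : Fin n → ℝ} {x : ℕ → Fin n → ℝ}

theorem succ_eq_sisStep (hx : SISdyn h β (fun k i => (∑ j, β k i j) + γ i) x) (k : ℕ) :
    x (k + 1) = sisStep h (β k) γ (x k) :=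
  funext (hx k)

theorem mem_Icc_s13 (hx : SISdyn h β (fun k i => (∑ j, β k i j) + γ i) x) (hh : 0 ≤ h)
    (hβ : ∀ k i j, 0 ≤ β k i j) (hγ : ∀ i, 0 ≤ γ i)
    (hbound : ∀ k i, h * ((∑ j, β k i j) + γ i) ≤ 1) (hx0 : ∀ i, x 0 i ∈ Set.Icc (0 : ℝ) 1) :
    ∀ k i, x k i ∈ Set.Icc (0 : ℝ) 1 := by
  intro k
  induction k with
  | zero => exact hx0
  | succ k ih =>
    rw [hx.succ_eq_sisStep]
    exact sisStep_mem_Icc hh (hβ k) hγ (hbound k) ih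

theorem norm_le_pow (hx : SISdyn h β (fun k i => (∑ j, β k i j) + γ i) x) {g : ℝ} (hh : 0 ≤ h)
    (hβ : ∀ k i j, 0 ≤ β k i j) (hγ : ∀ i, 0 ≤ γ i) (hg : ∀ i, g ≤ γ i)
    (hbound : ∀ k i, h * ((∑ j, β k i j) + γ i) ≤ 1) (hx0 : ∀ i, x 0 i ∈ Set.Icc (0 : ℝ) 1)
    (k : ℕ) : ‖x k‖ ≤ ‖x 0‖ * max 0 (1 - h * g) ^ k := by
  induction k with
  | zero => simp
  | succ k ih =>
    calc ‖x (k + 1)‖ ≤ max 0 (1 - h * g) * ‖x k‖ := by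
          rw [hx.succ_eq_sisStep]
          exact norm_sisStep_le hh (hβ k) hγ hg (hbound k) (hx.mem_Icc_s13 hh hβ hγ hbound hx0 k)
      _ ≤ max 0 (1 - h * g) * (‖x 0‖ * max 0 (1 - h * g) ^ k) := by gcongr
      _ = ‖x 0‖ * max 0 (1 - h * g) ^ (k + 1) := by ring

end SISdyn

theorem stmt13_general {n : ℕ} (h : ℝ) (hh : 0 < h)
    (β : ℕ → Fin n → Fin n → ℝ) (γ : Fin n → ℝ)
    (hβ0 : ∀ k i j, 0 ≤ β k i j) (hγ : ∀ i, 0 < γ i)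
    (hbound : ∀ k i, h * ((∑ j, β k i j) + γ i) ≤ 1) :
    ∃ α > (0:ℝ), ∃ η : ℝ, 0 ≤ η ∧ η < 1 ∧
      ∀ x : ℕ → Fin n → ℝ,
        SISdyn h β (fun k i => (∑ j, β k i j) + γ i) x →
        (∀ i, x 0 i ∈ Set.Icc (0:ℝ) 1) →
        ∀ k, ‖x k‖ ≤ α * ‖x 0‖ * η ^ k := by
  obtain ⟨g, hg0, hg⟩ := Finite.exists_pos_forall_le hγ
  have hγ0 : ∀ i, 0 ≤ γ i := fun i => (hγ i).le
  refine ⟨1, one_pos, max 0 (1 - h * g), le_max_left _ _,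
    max_lt one_pos (by linarith [mul_pos hh hg0]), fun x hx hx0 k => ?_⟩
  rw [one_mul]
  exact hx.norm_le_pow hh.le hβ0 hγ0 hg hbound hx0 k

theorem stmt13 {n : ℕ} (p : ℕ) (hp : 0 < p) (h : ℝ) (hh : 0 < h)
    (β : ℕ → Fin n → Fin n → ℝ) (γ : Fin n → ℝ)
    (hperβ : ∀ k, β (k + p) = β k)
    (hβ0 : ∀ k i j, 0 ≤ β k i j) (hγ : ∀ i, 0 < γ i)
    (hbound : ∀ k i, h * ((∑ j, β k i j) + γ i) ≤ 1) :
    ∃ α > (0:ℝ), ∃ η : ℝ, 0 ≤ η ∧ η < 1 ∧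
      ∀ x : ℕ → Fin n → ℝ,
        SISdyn h β (fun k i => (∑ j, β k i j) + γ i) x →
        (∀ i, x 0 i ∈ Set.Icc (0:ℝ) 1) →
        ∀ k, ‖x k‖ ≤ α * ‖x 0‖ * η ^ k :=
  stmt13_general h hh β γ hβ0 hγ hbound
end
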